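/- arXiv:1912.01597 — 5 statements merged into one kernel-verified Lean document; each statement's English description precedes it below -/
import Mathlib

section
/- Let f₁,…,fₙ: ℝ^d → ℝ each be μ-strongly convex (μ > 0), C², with H-Lipschitz Hessian, and let x⋆ be the minimizer of f = (1/n)∑ᵢ fᵢ. Given points w₁,…,wₙ ∈ ℝ^d, define H̄ = (1/n)∑ᵢ ∇²fᵢ(wᵢ) and x⁺ = H̄⁻¹[(1/n)∑ᵢ (∇²fᵢ(wᵢ)wᵢ − ∇fᵢ(wᵢ))]. Then ‖x⁺ − x⋆‖ ≤ (H/(2μ)) · (1/n)∑ᵢ ‖wᵢ − x⋆‖². -/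
/-!
The Hessian average `H̄` is `μ`-coercive, so `μ ‖x⁺ - x⋆‖ ≤ ‖H̄ (x⁺ - x⋆)‖`. Since `∑ᵢ ∇fᵢ(x⋆) = 0`,
the Newton equation turns `H̄ (x⁺ - x⋆)` into the average of the first-order Taylor remainders
`∇²fᵢ(wᵢ)(wᵢ - x⋆) - (∇fᵢ(wᵢ) - ∇fᵢ(x⋆))` of the gradients, each of norm at most
`H/2 ‖wᵢ - x⋆‖²` because the Hessians are `H`-Lipschitz.
-/

open scoped RealInnerProductSpace

theorem norm_fderiv_apply_sub_sub_le {E F : Type*} [NormedAddCommGroup E] [NormedSpace ℝ E]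
    [NormedAddCommGroup F] [NormedSpace ℝ F] {g : E → F} (hg : Differentiable ℝ g) {H : ℝ}
    (hLip : ∀ x y, ‖fderiv ℝ g x - fderiv ℝ g y‖ ≤ H * ‖x - y‖) (a b : E) :
    ‖fderiv ℝ g b (b - a) - (g b - g a)‖ ≤ H / 2 * ‖b - a‖ ^ 2 := by
  set v := b - a
  -- `φ 1` is the remainder; compare `φ` with `t ↦ H/2 t² ‖v‖²` on `[0, 1]`.
  let φ : ℝ → F := fun t => t • fderiv ℝ g b v - (g b - g (b - t • v))
  have hφ : ∀ t, HasDerivAt φ (fderiv ℝ g b v - fderiv ℝ g (b - t • v) v) t := by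
    intro t
    have hline : HasDerivAt (fun s : ℝ => b - s • v) (-v) t := by
      simpa using ((hasDerivAt_id t).smul_const v).const_sub b
    refine (((hasDerivAt_id t).smul_const (fderiv ℝ g b v)).fun_sub
      (((hg _).hasFDerivAt.comp_hasDerivAt t hline).const_sub (g b))).congr_deriv ?_
    simp
  have hB : ∀ t, HasDerivAt (fun t : ℝ => H / 2 * t ^ 2 * ‖v‖ ^ 2) (H * t * ‖v‖ ^ 2) t := by
    intro t
    refine (((hasDerivAt_pow 2 t).const_mul (H / 2)).mul_const (‖v‖ ^ 2)).congr_deriv ?_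
    norm_num only [pow_one, mul_one]
    ring
  have bound : ∀ t ∈ Set.Ico (0 : ℝ) 1,
      ‖fderiv ℝ g b v - fderiv ℝ g (b - t • v) v‖ ≤ H * t * ‖v‖ ^ 2 := by
    rintro t ⟨ht, -⟩
    calc ‖(fderiv ℝ g b - fderiv ℝ g (b - t • v)) v‖
        ≤ ‖fderiv ℝ g b - fderiv ℝ g (b - t • v)‖ * ‖v‖ := ContinuousLinearMap.le_opNorm _ v
      _ ≤ H * ‖t • v‖ * ‖v‖ := by gcongr; simpa using hLip b (b - t • v)
      _ = H * t * ‖v‖ ^ 2 := by rw [norm_smul, Real.norm_of_nonneg ht]; ring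
  have := image_norm_le_of_norm_deriv_right_le_deriv_boundary
    (fun t _ => (hφ t).continuousAt.continuousWithinAt) (fun t _ => (hφ t).hasDerivWithinAt)
    (by simp [φ]) hB bound (Set.right_mem_Icc.2 zero_le_one)
  simpa [φ, v] using this

theorem ContDiff.differentiable_gradient {F : Type*} [NormedAddCommGroup F]
    [InnerProductSpace ℝ F] [CompleteSpace F] {f : F → ℝ} (hf : ContDiff ℝ 2 f) :
    Differentiable ℝ (gradient f) :=
  (InnerProductSpace.toDual ℝ F).symm.differentiable.comp
    ((hf.fderiv_right (by norm_num)).differentiable one_ne_zero)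

theorem mul_norm_le_norm_apply_of_le_inner {E : Type*} [NormedAddCommGroup E]
    [InnerProductSpace ℝ E] {T : E → E} {μ : ℝ} (hT : ∀ v, μ * ‖v‖ ^ 2 ≤ ⟪T v, v⟫) (v : E) :
    μ * ‖v‖ ≤ ‖T v‖ := by
  rcases eq_or_ne v 0 with rfl | hv
  · simp
  refine le_of_mul_le_mul_right ?_ (norm_pos_iff.2 hv)
  calc μ * ‖v‖ * ‖v‖ = μ * ‖v‖ ^ 2 := by ring
    _ ≤ ⟪T v, v⟫ := hT v
    _ ≤ ‖T v‖ * ‖v‖ := real_inner_le_norm _ _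

theorem card_mul_norm_sub_le_of_newton_step {ι E : Type*} [Fintype ι] [NormedAddCommGroup E]
    [InnerProductSpace ℝ E] {A : ι → E →L[ℝ] E} {g : ι → E → E} {μ : ℝ} {ε : ι → ℝ}
    {xstar xplus : E} {w : ι → E} (hA : ∀ i v, μ * ‖v‖ ^ 2 ≤ ⟪A i v, v⟫)
    (hstar : ∑ i, g i xstar = 0) (hstep : (∑ i, A i) xplus = ∑ i, (A i (w i) - g i (w i)))
    (hε : ∀ i, ‖A i (w i - xstar) - (g i (w i) - g i xstar)‖ ≤ ε i) :
    Fintype.card ι * μ * ‖xplus - xstar‖ ≤ ∑ i, ε i := by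
  have hcoercive : ∀ v, Fintype.card ι * μ * ‖v‖ ^ 2 ≤ ⟪(∑ i, A i) v, v⟫ := by
    intro v
    simpa [sum_apply, sum_inner, mul_assoc] using
      Finset.sum_le_sum fun i (_ : i ∈ Finset.univ) => hA i v
  have herror : (∑ i, A i) (xplus - xstar) =
      ∑ i, (A i (w i - xstar) - (g i (w i) - g i xstar)) := by
    simp only [map_sub, hstep, sum_apply, Finset.sum_sub_distrib, hstar]
    abel
  calc Fintype.card ι * μ * ‖xplus - xstar‖ ≤ ‖(∑ i, A i) (xplus - xstar)‖ :=
        mul_norm_le_norm_apply_of_le_inner hcoercive _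
    _ ≤ ∑ i, ‖A i (w i - xstar) - (g i (w i) - g i xstar)‖ := herror ▸ norm_sum_le _ _
    _ ≤ ∑ i, ε i := Finset.sum_le_sum fun i _ => hε i

theorem stochastic_newton_step_contraction_general
    (d n : ℕ) (hn : 0 < n)
    (f : Fin n → EuclideanSpace ℝ (Fin d) → ℝ)
    (μ H : ℝ) (hμ : 0 < μ)
    (hf : ∀ i, ContDiff ℝ 2 (f i))
    (hsc : ∀ i, ∀ x : EuclideanSpace ℝ (Fin d), ∀ v : EuclideanSpace ℝ (Fin d),
      μ * ‖v‖ ^ 2 ≤ ⟪fderiv ℝ (gradient (f i)) x v, v⟫)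
    (hLip : ∀ i, ∀ x y : EuclideanSpace ℝ (Fin d),
      ‖fderiv ℝ (gradient (f i)) x - fderiv ℝ (gradient (f i)) y‖ ≤ H * ‖x - y‖)
    (xstar : EuclideanSpace ℝ (Fin d))
    (hstar : ∑ i, gradient (f i) xstar = 0)
    (w : Fin n → EuclideanSpace ℝ (Fin d))
    (xplus : EuclideanSpace ℝ (Fin d))
    (hstep : ((n : ℝ)⁻¹ • ∑ i, fderiv ℝ (gradient (f i)) (w i)) xplus
      = (n : ℝ)⁻¹ • ∑ i, (fderiv ℝ (gradient (f i)) (w i) (w i) - gradient (f i) (w i))) :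
    ‖xplus - xstar‖ ≤ H / (2 * μ) * ((n : ℝ)⁻¹ * ∑ i, ‖w i - xstar‖ ^ 2) := by
  have hn' : (0 : ℝ) < n := Nat.cast_pos.2 hn
  have hstep' : (∑ i, fderiv ℝ (gradient (f i)) (w i)) xplus
      = ∑ i, (fderiv ℝ (gradient (f i)) (w i) (w i) - gradient (f i) (w i)) := by
    simpa [hn'.ne'] using hstep
  have hnewton := card_mul_norm_sub_le_of_newton_step (fun i => hsc i (w i)) hstar hstep'
    fun i => norm_fderiv_apply_sub_sub_le (hf i).differentiable_gradient (hLip i) xstar (w i)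
  rw [Fintype.card_fin, ← Finset.mul_sum] at hnewton
  have hrhs : H / (2 * μ) * ((n : ℝ)⁻¹ * ∑ i, ‖w i - xstar‖ ^ 2)
      = (H / 2 * ∑ i, ‖w i - xstar‖ ^ 2) / (n * μ) := by
    field_simp
  rw [hrhs, le_div_iff₀ (by positivity)]
  linarith

theorem stochastic_newton_step_contraction
    (d n : ℕ) (hn : 0 < n)
    (f : Fin n → EuclideanSpace ℝ (Fin d) → ℝ)
    (μ H : ℝ) (hμ : 0 < μ) (hH : 0 ≤ H)
    (hf : ∀ i, ContDiff ℝ 2 (f i))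
    (hsc : ∀ i, ∀ x : EuclideanSpace ℝ (Fin d), ∀ v : EuclideanSpace ℝ (Fin d),
      μ * ‖v‖ ^ 2 ≤ ⟪fderiv ℝ (gradient (f i)) x v, v⟫)
    (hLip : ∀ i, ∀ x y : EuclideanSpace ℝ (Fin d),
      ‖fderiv ℝ (gradient (f i)) x - fderiv ℝ (gradient (f i)) y‖ ≤ H * ‖x - y‖)
    (xstar : EuclideanSpace ℝ (Fin d))
    (hstar : ∑ i, gradient (f i) xstar = 0)
    (w : Fin n → EuclideanSpace ℝ (Fin d))
    (xplus : EuclideanSpace ℝ (Fin d))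
    (hstep : ((n : ℝ)⁻¹ • ∑ i, fderiv ℝ (gradient (f i)) (w i)) xplus
      = (n : ℝ)⁻¹ • ∑ i, (fderiv ℝ (gradient (f i)) (w i) (w i) - gradient (f i) (w i))) :
    ‖xplus - xstar‖ ≤ H / (2 * μ) * ((n : ℝ)⁻¹ * ∑ i, ‖w i - xstar‖ ^ 2) :=
  stochastic_newton_step_contraction_general d n hn f μ H hμ hf hsc hLip xstar hstar w xplus hstep
end

section
/- Let a, b ≥ 0 with a ≤ 1. Suppose a sequence Wₖ ≥ 0 satisfies Wₖ₊₁ ≤ (1 − a + a·b·Wₖ)·Wₖ and W₀ ≤ c where b·c ≤ 1/4. Then Wₖ ≤ c for all k and Wₖ₊₁ ≤ (1 − (3a/4))·Wₖ for all k. In particular Wₖ ≤ (1 − 3a/4)^k · W₀. -/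
theorem newton_lyapunov_recursion
    (a b c : ℝ) (ha0 : 0 ≤ a) (ha1 : a ≤ 1) (hb : 0 ≤ b)
    (W : ℕ → ℝ) (hW : ∀ k, 0 ≤ W k)
    (hrec : ∀ k, W (k + 1) ≤ (1 - a + a * b * W k) * W k)
    (hW0 : W 0 ≤ c) (hbc : b * c ≤ 1 / 4) :
    (∀ k, W k ≤ c) ∧
    (∀ k, W (k + 1) ≤ (1 - 3 * a / 4) * W k) ∧
    (∀ k, W k ≤ (1 - 3 * a / 4) ^ k * W 0) := by
  have step : ∀ k, W k ≤ c → W (k + 1) ≤ (1 - 3 * a / 4) * W k := by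
    intro k hk
    have h1 : b * W k ≤ 1 / 4 := le_trans (by nlinarith [hW k]) hbc
    have h2 : 1 - a + a * b * W k ≤ 1 - 3 * a / 4 := by nlinarith
    calc W (k + 1) ≤ (1 - a + a * b * W k) * W k := hrec k
      _ ≤ (1 - 3 * a / 4) * W k := by nlinarith [hW k]
  have hle : ∀ k, W k ≤ c := by
    intro k
    induction k with
    | zero => exact hW0
    | succ n ih =>
      have := step n ih
      nlinarith [hW n]
  refine ⟨hle, fun k => step k (hle k), fun k => ?_⟩
  induction k with
  | zero => simp
  | succ n ih =>
    have h1 := step n (hle n)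
    have hpos : (0:ℝ) ≤ 1 - 3 * a / 4 := by linarith
    calc W (n + 1) ≤ (1 - 3 * a / 4) * W n := h1
      _ ≤ (1 - 3 * a / 4) * ((1 - 3 * a / 4) ^ n * W 0) := by
          exact mul_le_mul_of_nonneg_left ih hpos
      _ = (1 - 3 * a / 4) ^ (n + 1) * W 0 := by ring
end

section
/- Newton's method local quadratic convergence: if f: ℝ^d → ℝ is C², μ-strongly convex, has H-Lipschitz Hessian, and x⋆ is its minimizer, then the Newton iterate x⁺ = x − (∇²f(x))⁻¹∇f(x) satisfies ‖x⁺ − x⋆‖ ≤ (H/(2μ))‖x − x⋆‖². -/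
open scoped RealInnerProductSpace

theorem norm_sub_sub_fderiv_apply_le_of_lipschitz_fderiv {E F : Type*} [NormedAddCommGroup E]
    [NormedSpace ℝ E] [NormedAddCommGroup F] [NormedSpace ℝ F] {g : E → F} {H : ℝ}
    (hg : Differentiable ℝ g)
    (hLip : ∀ a b, ‖fderiv ℝ g a - fderiv ℝ g b‖ ≤ H * ‖a - b‖) (x y : E) :
    ‖g y - g x - fderiv ℝ g x (y - x)‖ ≤ H / 2 * ‖y - x‖ ^ 2 := by
  set v := y - x
  set A := fderiv ℝ g x
  -- Fence `t ↦ g (x + t • v) - g x - t • A v` on `[0, 1]` by `t ↦ H/2 ‖v‖² t²`.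
  let φ : ℝ → F := fun t => g (x + t • v) - g x - t • A v
  have hline (t : ℝ) : HasDerivAt (fun t : ℝ => x + t • v) v t := by
    simpa using ((hasDerivAt_id t).smul_const v).const_add x
  have hφ (t : ℝ) : HasDerivAt φ (fderiv ℝ g (x + t • v) v - A v) t := by
    have hgt := (hg (x + t • v)).hasFDerivAt.comp_hasDerivAt t (hline t)
    exact ((hgt.sub_const (g x)).sub ((hasDerivAt_id' t).smul_const (A v))).congr_deriv
      (by rw [one_smul])
  have hB (t : ℝ) : HasDerivAt (fun t => H / 2 * ‖v‖ ^ 2 * t ^ 2) (H * ‖v‖ ^ 2 * t) t :=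
    ((hasDerivAt_pow 2 t).const_mul (H / 2 * ‖v‖ ^ 2)).congr_deriv (by push_cast; ring)
  have hbound : ∀ t ∈ Set.Ico (0 : ℝ) 1,
      ‖fderiv ℝ g (x + t • v) v - A v‖ ≤ H * ‖v‖ ^ 2 * t := by
    rintro t ⟨ht, -⟩
    calc ‖fderiv ℝ g (x + t • v) v - A v‖ ≤ ‖fderiv ℝ g (x + t • v) - A‖ * ‖v‖ :=
          (fderiv ℝ g (x + t • v) - A).le_opNorm v
      _ ≤ H * ‖(x + t • v) - x‖ * ‖v‖ := by gcongr; exact hLip _ _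
      _ = H * ‖v‖ ^ 2 * t := by
          rw [add_sub_cancel_left, norm_smul, Real.norm_of_nonneg ht]; ring
  have hfence := image_norm_le_of_norm_deriv_right_le_deriv_boundary
    (fun t _ => (hφ t).continuousAt.continuousWithinAt)
    (fun t _ => (hφ t).hasDerivWithinAt) (by simp [φ]) hB hbound
    (Set.right_mem_Icc.2 zero_le_one)
  simpa [φ, v] using hfence

theorem mul_norm_le_norm_apply_of_coercive {E : Type*} [NormedAddCommGroup E]
    [InnerProductSpace ℝ E] {A : E →L[ℝ] E} {μ : ℝ} (hA : ∀ v, μ * ‖v‖ ^ 2 ≤ ⟪A v, v⟫)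
    (w : E) : μ * ‖w‖ ≤ ‖A w‖ := by
  rcases (norm_nonneg w).eq_or_lt with hw | hw
  · simp [← hw]
  · refine le_of_mul_le_mul_right ?_ hw
    calc μ * ‖w‖ * ‖w‖ = μ * ‖w‖ ^ 2 := by ring
      _ ≤ ⟪A w, w⟫ := hA w
      _ ≤ ‖A w‖ * ‖w‖ := real_inner_le_norm _ _

theorem norm_newton_step_sub_zero_le {E : Type*} [NormedAddCommGroup E]
    [InnerProductSpace ℝ E] {g : E → E} {μ H : ℝ} (hμ : 0 < μ) (hg : Differentiable ℝ g)
    (hsc : ∀ x v, μ * ‖v‖ ^ 2 ≤ ⟪fderiv ℝ g x v, v⟫)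
    (hLip : ∀ a b, ‖fderiv ℝ g a - fderiv ℝ g b‖ ≤ H * ‖a - b‖)
    {xstar x xplus : E} (hstar : g xstar = 0) (hstep : fderiv ℝ g x (xplus - x) = -g x) :
    ‖xplus - xstar‖ ≤ H / (2 * μ) * ‖x - xstar‖ ^ 2 := by
  have herror : fderiv ℝ g x (xplus - xstar) = g xstar - g x - fderiv ℝ g x (xstar - x) := by
    rw [show xplus - xstar = (xplus - x) - (xstar - x) by abel, map_sub, hstep, hstar]
    abel
  have hμw : μ * ‖xplus - xstar‖ ≤ H / 2 * ‖x - xstar‖ ^ 2 := by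
    calc μ * ‖xplus - xstar‖ ≤ ‖fderiv ℝ g x (xplus - xstar)‖ :=
          mul_norm_le_norm_apply_of_coercive (hsc x) _
      _ ≤ H / 2 * ‖xstar - x‖ ^ 2 :=
          herror ▸ norm_sub_sub_fderiv_apply_le_of_lipschitz_fderiv hg hLip x xstar
      _ = H / 2 * ‖x - xstar‖ ^ 2 := by rw [norm_sub_rev]
  rw [div_mul_eq_div_div, div_mul_eq_mul_div, le_div_iff₀ hμ]
  linarith

theorem newton_step_quadratic_convergence_general
    (d : ℕ) (f : EuclideanSpace ℝ (Fin d) → ℝ)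
    (μ H : ℝ) (hμ : 0 < μ)
    (hf : ContDiff ℝ 2 f)
    (hsc : ∀ x v : EuclideanSpace ℝ (Fin d), μ * ‖v‖ ^ 2 ≤ ⟪fderiv ℝ (gradient f) x v, v⟫)
    (hLip : ∀ x y : EuclideanSpace ℝ (Fin d),
      ‖fderiv ℝ (gradient f) x - fderiv ℝ (gradient f) y‖ ≤ H * ‖x - y‖)
    (xstar : EuclideanSpace ℝ (Fin d)) (hstar : gradient f xstar = 0)
    (x xplus : EuclideanSpace ℝ (Fin d))
    (hstep : fderiv ℝ (gradient f) x (xplus - x) = -gradient f x) :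
    ‖xplus - xstar‖ ≤ H / (2 * μ) * ‖x - xstar‖ ^ 2 :=
  norm_newton_step_sub_zero_le hμ hf.differentiable_gradient hsc hLip hstar hstep

theorem newton_step_quadratic_convergence
    (d : ℕ) (f : EuclideanSpace ℝ (Fin d) → ℝ)
    (μ H : ℝ) (hμ : 0 < μ) (hH : 0 ≤ H)
    (hf : ContDiff ℝ 2 f)
    (hsc : ∀ x v : EuclideanSpace ℝ (Fin d), μ * ‖v‖ ^ 2 ≤ ⟪fderiv ℝ (gradient f) x v, v⟫)
    (hLip : ∀ x y : EuclideanSpace ℝ (Fin d),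
      ‖fderiv ℝ (gradient f) x - fderiv ℝ (gradient f) y‖ ≤ H * ‖x - y‖)
    (xstar : EuclideanSpace ℝ (Fin d)) (hstar : gradient f xstar = 0)
    (x xplus : EuclideanSpace ℝ (Fin d))
    (hstep : fderiv ℝ (gradient f) x (xplus - x) = -gradient f x) :
    ‖xplus - xstar‖ ≤ H / (2 * μ) * ‖x - xstar‖ ^ 2 :=
  newton_step_quadratic_convergence_general d f μ H hμ hf hsc hLip xstar hstar x xplus hstep
end

section
/- Let each fᵢ: ℝ^d → ℝ have H-Lipschitz Hessian and let M ≥ H. Define φᵢ(x) = fᵢ(wᵢ) + ⟨∇fᵢ(wᵢ), x − wᵢ⟩ + (1/2)⟨∇²fᵢ(wᵢ)(x − wᵢ), x − wᵢ⟩, and let x⁺ minimize (1/n)∑ᵢ[φᵢ(x) + (M/6)‖x − wᵢ‖³]. Then f(x⁺) ≤ min over x of [f(x) + ((M+H)/6)·(1/n)∑ᵢ ‖x − wᵢ‖³], where f = (1/n)∑ᵢ fᵢ. -/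
/-!
Taylor's theorem with an `H`-Lipschitz Hessian gives `|fᵢ x - φᵢ x| ≤ (H/6)‖x - wᵢ‖³`; along the
segment from `w` the Hessian moves by at most `Ht‖v‖`, and this bound is integrated twice (once for
the gradient, once for the function). So each cubic model `φᵢ + (M/6)‖· - wᵢ‖³` lies above `fᵢ`
(as `H ≤ M`) and below `fᵢ + ((M+H)/6)‖· - wᵢ‖³`. Averaging over `i` and comparing the model at
its minimizer `x⁺` with its value at `y` gives the bound.
-/

open scoped RealInnerProductSpace

theorem norm_le_of_norm_deriv_le_mul_pow {F : Type*} [NormedAddCommGroup F] [NormedSpace ℝ F]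
    {g g' : ℝ → F} {C t : ℝ} (k : ℕ) (hg : ∀ s, HasDerivAt g (g' s) s) (hg0 : g 0 = 0)
    (hbound : ∀ s ∈ Set.Ico 0 t, ‖g' s‖ ≤ C * s ^ k) (ht : 0 ≤ t) :
    ‖g t‖ ≤ C * t ^ (k + 1) / (k + 1) := by
  have hB : ∀ s : ℝ, HasDerivAt (fun s => C * s ^ (k + 1) / (k + 1)) (C * s ^ k) s := by
    intro s
    refine (((hasDerivAt_pow (k + 1) s).const_mul C).div_const ((k : ℝ) + 1)).congr_deriv ?_
    push_cast
    field_simp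
  refine image_norm_le_of_norm_deriv_right_le_deriv_boundary
    (fun s _ => (hg s).continuousAt.continuousWithinAt) (fun s _ => (hg s).hasDerivWithinAt)
    (by simp [hg0]) hB hbound ⟨ht, le_rfl⟩

variable {E : Type*} [NormedAddCommGroup E] [InnerProductSpace ℝ E] [CompleteSpace E]

theorem abs_sub_quadratic_taylor_le {f : E → ℝ} {H : ℝ} (hf : Differentiable ℝ f)
    (hgrad : Differentiable ℝ (gradient f)) {w : E}
    (hHess : ∀ y, ‖fderiv ℝ (gradient f) y - fderiv ℝ (gradient f) w‖ ≤ H * ‖y - w‖) (x : E) :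
    |f x - (f w + ⟪gradient f w, x - w⟫
      + (1 / 2) * ⟪fderiv ℝ (gradient f) w (x - w), x - w⟫)| ≤ H / 6 * ‖x - w‖ ^ 3 := by
  set v := x - w
  set A := fderiv ℝ (gradient f)
  have hline : ∀ t : ℝ, HasDerivAt (fun t : ℝ => w + t • v) v t := fun t => by
    simpa using ((hasDerivAt_id t).smul_const v).const_add w
  set gradRem : ℝ → E := fun t => gradient f (w + t • v) - gradient f w - t • A w v
  have hgradRem : ∀ t, HasDerivAt gradRem (A (w + t • v) v - A w v) t := fun t => by
    refine ((((hgrad _).hasFDerivAt.comp_hasDerivAt t (hline t)).sub_const _).fun_sub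
      ((hasDerivAt_id' t).smul_const (A w v))).congr_deriv ?_
    rw [one_smul]
  have hgradRem_deriv_le : ∀ s, 0 ≤ s → ‖A (w + s • v) v - A w v‖ ≤ H * ‖v‖ ^ 2 * s ^ 1 :=
    fun s hs => calc
      ‖A (w + s • v) v - A w v‖ = ‖(A (w + s • v) - A w) v‖ := rfl
      _ ≤ ‖A (w + s • v) - A w‖ * ‖v‖ := ContinuousLinearMap.le_opNorm _ _
      _ ≤ H * ‖s • v‖ * ‖v‖ := by gcongr; simpa using hHess (w + s • v)
      _ = H * ‖v‖ ^ 2 * s ^ 1 := by rw [norm_smul, Real.norm_of_nonneg hs]; ring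
  have hgradRem_le : ∀ t, 0 ≤ t → ‖gradRem t‖ ≤ H * ‖v‖ ^ 2 * t ^ 2 / 2 := fun t ht => by
    refine (norm_le_of_norm_deriv_le_mul_pow 1 hgradRem (by simp [gradRem])
      (fun s hs => hgradRem_deriv_le s hs.1) ht).trans_eq ?_
    norm_num
  set rem : ℝ → ℝ := fun t => f (w + t • v) - f w - t * ⟪gradient f w, v⟫ - t ^ 2 / 2 * ⟪A w v, v⟫
  have hrem : ∀ t, HasDerivAt rem ⟪gradRem t, v⟫ t := fun t => by
    have hfline : HasDerivAt (fun s : ℝ => f (w + s • v)) (fderiv ℝ f (w + t • v) v) t :=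
      (hf _).hasFDerivAt.comp_hasDerivAt t (hline t)
    refine (((hfline.sub_const (f w)).fun_sub ((hasDerivAt_id' t).mul_const _)).fun_sub
      (((hasDerivAt_pow 2 t).div_const 2).mul_const _)).congr_deriv ?_
    simp only [gradRem, inner_sub_left, inner_smul_left, inner_gradient_left]
    simp
  have hrem_deriv_le : ∀ s, 0 ≤ s → ‖⟪gradRem s, v⟫‖ ≤ H * ‖v‖ ^ 3 / 2 * s ^ 2 :=
    fun s hs => calc
      ‖⟪gradRem s, v⟫‖ ≤ ‖gradRem s‖ * ‖v‖ := norm_inner_le_norm _ _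
      _ ≤ H * ‖v‖ ^ 2 * s ^ 2 / 2 * ‖v‖ := by gcongr; exact hgradRem_le s hs
      _ = H * ‖v‖ ^ 3 / 2 * s ^ 2 := by ring
  have hrem_le := norm_le_of_norm_deriv_le_mul_pow 2 hrem (by simp [rem])
    (fun s hs => hrem_deriv_le s hs.1) zero_le_one
  calc |f x - (f w + ⟪gradient f w, v⟫ + 1 / 2 * ⟪A w v, v⟫)| = |rem 1| := by
        simp only [rem, v, one_smul, add_sub_cancel, one_pow, one_mul]
        congr 1; ring
    _ ≤ H / 6 * ‖v‖ ^ 3 := by norm_num at hrem_le; linarith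

theorem ContDiff.differentiable_gradient_s8 {f : E → ℝ} (hf : ContDiff ℝ 2 f) :
    Differentiable ℝ (gradient f) :=
  (InnerProductSpace.toDual ℝ E).symm.differentiable.comp
    ((hf.fderiv_right (by norm_num)).differentiable one_ne_zero)

theorem cubic_model_min_upper_bound_general
    (d n : ℕ)
    (f : Fin n → EuclideanSpace ℝ (Fin d) → ℝ)
    (H M : ℝ) (hM : H ≤ M)
    (hf : ∀ i, ContDiff ℝ 2 (f i))
    (hLip : ∀ i, ∀ x y : EuclideanSpace ℝ (Fin d),
      ‖fderiv ℝ (gradient (f i)) x - fderiv ℝ (gradient (f i)) y‖ ≤ H * ‖x - y‖)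
    (w : Fin n → EuclideanSpace ℝ (Fin d))
    (φ : Fin n → EuclideanSpace ℝ (Fin d) → ℝ)
    (hφ : ∀ i x, φ i x = f i (w i) + ⟪gradient (f i) (w i), x - w i⟫
      + (1 / 2) * ⟪fderiv ℝ (gradient (f i)) (w i) (x - w i), x - w i⟫)
    (xplus : EuclideanSpace ℝ (Fin d))
    (hxplus : ∀ y : EuclideanSpace ℝ (Fin d),
      (n : ℝ)⁻¹ * ∑ i, (φ i xplus + M / 6 * ‖xplus - w i‖ ^ 3)
        ≤ (n : ℝ)⁻¹ * ∑ i, (φ i y + M / 6 * ‖y - w i‖ ^ 3)) :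
    ∀ y : EuclideanSpace ℝ (Fin d),
      (n : ℝ)⁻¹ * ∑ i, f i xplus
        ≤ (n : ℝ)⁻¹ * ∑ i, f i y + (M + H) / 6 * ((n : ℝ)⁻¹ * ∑ i, ‖y - w i‖ ^ 3) := by
  intro y
  have htaylor : ∀ i x, |f i x - φ i x| ≤ H / 6 * ‖x - w i‖ ^ 3 := fun i x => by
    rw [hφ]
    exact abs_sub_quadratic_taylor_le ((hf i).differentiable two_ne_zero)
      (hf i).differentiable_gradient_s8 (fun z => hLip i z (w i)) x
  have hmodel_upper : ∀ i, f i xplus ≤ φ i xplus + M / 6 * ‖xplus - w i‖ ^ 3 := fun i => by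
    have hH_le_M : H / 6 * ‖xplus - w i‖ ^ 3 ≤ M / 6 * ‖xplus - w i‖ ^ 3 := by gcongr
    linarith [(abs_le.mp (htaylor i xplus)).2]
  have hmodel_lower : ∀ i, φ i y + M / 6 * ‖y - w i‖ ^ 3 ≤ f i y + (M + H) / 6 * ‖y - w i‖ ^ 3 :=
    fun i => by linarith [(abs_le.mp (htaylor i y)).1]
  calc (n : ℝ)⁻¹ * ∑ i, f i xplus
      ≤ (n : ℝ)⁻¹ * ∑ i, (φ i xplus + M / 6 * ‖xplus - w i‖ ^ 3) :=
        mul_le_mul_of_nonneg_left (Finset.sum_le_sum fun i _ => hmodel_upper i) (by positivity)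
    _ ≤ (n : ℝ)⁻¹ * ∑ i, (φ i y + M / 6 * ‖y - w i‖ ^ 3) := hxplus y
    _ ≤ (n : ℝ)⁻¹ * ∑ i, (f i y + (M + H) / 6 * ‖y - w i‖ ^ 3) :=
        mul_le_mul_of_nonneg_left (Finset.sum_le_sum fun i _ => hmodel_lower i) (by positivity)
    _ = (n : ℝ)⁻¹ * ∑ i, f i y + (M + H) / 6 * ((n : ℝ)⁻¹ * ∑ i, ‖y - w i‖ ^ 3) := by
        rw [Finset.sum_add_distrib, ← Finset.mul_sum]
        ring

theorem cubic_model_min_upper_bound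
    (d n : ℕ) (hn : 0 < n)
    (f : Fin n → EuclideanSpace ℝ (Fin d) → ℝ)
    (H M : ℝ) (hH : 0 ≤ H) (hM : H ≤ M)
    (hf : ∀ i, ContDiff ℝ 2 (f i))
    (hLip : ∀ i, ∀ x y : EuclideanSpace ℝ (Fin d),
      ‖fderiv ℝ (gradient (f i)) x - fderiv ℝ (gradient (f i)) y‖ ≤ H * ‖x - y‖)
    (w : Fin n → EuclideanSpace ℝ (Fin d))
    (φ : Fin n → EuclideanSpace ℝ (Fin d) → ℝ)
    (hφ : ∀ i x, φ i x = f i (w i) + ⟪gradient (f i) (w i), x - w i⟫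
      + (1 / 2) * ⟪fderiv ℝ (gradient (f i)) (w i) (x - w i), x - w i⟫)
    (xplus : EuclideanSpace ℝ (Fin d))
    (hxplus : ∀ y : EuclideanSpace ℝ (Fin d),
      (n : ℝ)⁻¹ * ∑ i, (φ i xplus + M / 6 * ‖xplus - w i‖ ^ 3)
        ≤ (n : ℝ)⁻¹ * ∑ i, (φ i y + M / 6 * ‖y - w i‖ ^ 3)) :
    ∀ y : EuclideanSpace ℝ (Fin d),
      (n : ℝ)⁻¹ * ∑ i, f i xplus
        ≤ (n : ℝ)⁻¹ * ∑ i, f i y + (M + H) / 6 * ((n : ℝ)⁻¹ * ∑ i, ‖y - w i‖ ^ 3) :=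
  cubic_model_min_upper_bound_general d n f H M hM hf hLip w φ hφ xplus hxplus
end

section
/- Let f be μ-strongly convex with minimizer x⋆, each fᵢ have H-Lipschitz Hessian, M ≥ H, and suppose f(wᵢ) − f(x⋆) ≤ 2μ³/(M+H)² for all i. Then the cubic Newton update x⁺ (minimizer of the averaged cubically regularized quadratic model at w₁,…,wₙ) satisfies f(x⁺) − f(x⋆) ≤ 2μ³/(M+H)², i.e., the sublevel condition is preserved by the update. -/
/-!
Comparing each `f i` with its quadratic model `φ i` costs at most `H / 6 * ‖x - w i‖ ^ 3`
(Taylor's formula with a Lipschitz Hessian). Since `M ≥ H`, the averaged cubic model majorizes `F`,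
so `F x⁺` is at most the model's value at `x⋆`, which is at most
`F x⋆ + avg (M + H) / 6 * ‖x⋆ - w i‖ ^ 3`. Strong convexity at the minimizer turns the sublevel
hypothesis into `‖x⋆ - w i‖ ≤ 2μ / (M + H)`, and then each cubic term is at most
`(4 / 3) μ³ / (M + H) ^ 2`.
-/

open scoped RealInnerProductSpace

theorem norm_le_of_norm_deriv_le_mul_pow_s19 {E : Type*} [NormedAddCommGroup E] [NormedSpace ℝ E]
    {f f' : ℝ → E} {K : ℝ} (k : ℕ) (hf : ∀ t, HasDerivAt f (f' t) t) (h0 : f 0 = 0)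
    (hbound : ∀ t, 0 ≤ t → ‖f' t‖ ≤ K * t ^ k) {t : ℝ} (ht : 0 ≤ t) :
    ‖f t‖ ≤ K / (k + 1) * t ^ (k + 1) := by
  refine image_norm_le_of_norm_deriv_right_le_deriv_boundary
    (B := fun s => K / (k + 1) * s ^ (k + 1)) (B' := fun s => K * s ^ k)
    (fun s _ => (hf s).continuousAt.continuousWithinAt) (fun s _ => (hf s).hasDerivWithinAt)
    (by simp [h0]) (fun s => ?_) (fun s hs => hbound s hs.1) ⟨ht, le_rfl⟩
  refine ((hasDerivAt_pow (k + 1) s).const_mul (K / (k + 1))).congr_deriv ?_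
  rw [Nat.add_sub_cancel]
  push_cast
  field_simp

section Taylor

variable {E : Type*} [NormedAddCommGroup E] [InnerProductSpace ℝ E] [CompleteSpace E]

theorem ContDiff.gradient {g : E → ℝ} {m n : WithTop ℕ∞} (hg : ContDiff ℝ n g) (hmn : m + 1 ≤ n) :
    ContDiff ℝ m (gradient g) :=
  (InnerProductSpace.toDual ℝ E).symm.contDiff.comp (hg.fderiv_right hmn)

theorem abs_sub_taylor_two_le {g : E → ℝ} (hg : ContDiff ℝ 2 g) {H : ℝ}
    (hLip : ∀ x y, ‖fderiv ℝ (gradient g) x - fderiv ℝ (gradient g) y‖ ≤ H * ‖x - y‖) (w x : E) :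
    |g x - (g w + ⟪gradient g w, x - w⟫
      + (1 / 2) * ⟪fderiv ℝ (gradient g) w (x - w), x - w⟫)| ≤ H / 6 * ‖x - w‖ ^ 3 := by
  set u := x - w
  set D := fderiv ℝ (gradient g)
  -- The remainder `e` along the segment has `e 0 = e' 0 = 0` and `|e''(t)| ≤ H ‖u‖³ t`.
  have hline (t : ℝ) : HasDerivAt (fun t : ℝ => w + t • u) u t := by
    simpa using ((hasDerivAt_id t).smul_const u).const_add w
  let e (t : ℝ) : ℝ := g (w + t • u) - g w - t * ⟪gradient g w, u⟫ - t ^ 2 / 2 * ⟪D w u, u⟫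
  let e' (t : ℝ) : ℝ := ⟪gradient g (w + t • u), u⟫ - ⟪gradient g w, u⟫ - t * ⟪D w u, u⟫
  have he (t : ℝ) : HasDerivAt e (e' t) t := by
    have hgt := (hg.differentiable (by norm_num) _).hasFDerivAt.comp_hasDerivAt t (hline t)
    rw [← inner_gradient_left] at hgt
    refine (((hgt.sub_const (g w)).sub ((hasDerivAt_id t).mul_const ⟪gradient g w, u⟫)).sub
      (((hasDerivAt_pow 2 t).div_const 2).mul_const ⟪D w u, u⟫)).congr_deriv ?_
    simp [e']
  have he' (t : ℝ) : HasDerivAt e' ⟪(D (w + t • u) - D w) u, u⟫ t := by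
    have hGt := ((hg.gradient (m := 1) (by norm_num)).differentiable (by norm_num)
      _).hasFDerivAt.comp_hasDerivAt t (hline t)
    refine (((hGt.inner ℝ (hasDerivAt_const t u)).sub_const ⟪gradient g w, u⟫).sub
      ((hasDerivAt_id t).mul_const ⟪D w u, u⟫)).congr_deriv ?_
    simp [inner_sub_left, D]
  have hbound (t : ℝ) (ht : 0 ≤ t) : ‖⟪(D (w + t • u) - D w) u, u⟫‖ ≤ H * ‖u‖ ^ 3 * t ^ 1 :=
    calc ‖⟪(D (w + t • u) - D w) u, u⟫‖ ≤ ‖(D (w + t • u) - D w) u‖ * ‖u‖ := norm_inner_le_norm _ _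
      _ ≤ ‖D (w + t • u) - D w‖ * ‖u‖ * ‖u‖ := by gcongr; exact ContinuousLinearMap.le_opNorm _ _
      _ ≤ H * ‖w + t • u - w‖ * ‖u‖ * ‖u‖ := by gcongr; exact hLip _ _
      _ = H * ‖u‖ ^ 3 * t ^ 1 := by
        rw [add_sub_cancel_left, norm_smul, Real.norm_of_nonneg ht]; ring
  have h2 := norm_le_of_norm_deriv_le_mul_pow_s19 2 he (by simp [e])
    (fun t ht => norm_le_of_norm_deriv_le_mul_pow_s19 1 he' (by simp [e']) hbound ht) zero_le_one
  have he1 : e 1 = g x - (g w + ⟪gradient g w, u⟫ + (1 / 2) * ⟪D w u, u⟫) := by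
    simp only [e, u, one_smul, add_sub_cancel, one_mul, one_pow]
    ring
  rw [he1, Real.norm_eq_abs] at h2
  refine h2.trans_eq ?_
  push_cast
  ring

end Taylor

theorem mul_cube_le_of_sq_le {μ c r : ℝ} (hμ : 0 < μ) (hr : 0 ≤ r)
    (h : μ / 2 * r ^ 2 ≤ 2 * μ ^ 3 / c ^ 2) : c / 6 * r ^ 3 ≤ 2 * μ ^ 3 / c ^ 2 := by
  rcases le_or_gt c 0 with hc | hc
  · exact (mul_nonpos_of_nonpos_of_nonneg (by linarith) (by positivity)).trans (by positivity)
  have hr2 : r ^ 2 ≤ (2 * μ / c) ^ 2 :=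
    le_of_mul_le_mul_left (h.trans_eq (by ring)) (by positivity : 0 < μ / 2)
  have hrc : r ≤ 2 * μ / c := (pow_le_pow_iff_left₀ hr (by positivity) two_ne_zero).1 hr2
  calc c / 6 * r ^ 3 = c * r / 6 * r ^ 2 := by ring
    _ ≤ c * (2 * μ / c) / 6 * (2 * μ / c) ^ 2 := by gcongr
    _ = 4 / 3 * μ ^ 3 / c ^ 2 := by field_simp; ring
    _ ≤ 2 * μ ^ 3 / c ^ 2 := by gcongr; norm_num

theorem inv_natCast_mul_sum_le {n : ℕ} {a : Fin n → ℝ} {c : ℝ} (hc : 0 ≤ c) (h : ∀ i, a i ≤ c) :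
    (n : ℝ)⁻¹ * ∑ i, a i ≤ c := by
  calc (n : ℝ)⁻¹ * ∑ i, a i ≤ (n : ℝ)⁻¹ * (n * c) := by
        gcongr
        simpa using Finset.sum_le_card_nsmul Finset.univ a c fun i _ => h i
    _ ≤ c := by
        rcases n.eq_zero_or_pos with rfl | hn
        · simpa using hc
        · rw [inv_mul_cancel_left₀ (by positivity)]

theorem cubic_newton_sublevel_invariance_general
    (d n : ℕ)
    (f : Fin n → EuclideanSpace ℝ (Fin d) → ℝ)
    (μ H M : ℝ) (hμ : 0 < μ) (hM : H ≤ M)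
    (hf : ∀ i, ContDiff ℝ 2 (f i))
    (hLip : ∀ i, ∀ x y : EuclideanSpace ℝ (Fin d),
      ‖fderiv ℝ (gradient (f i)) x - fderiv ℝ (gradient (f i)) y‖ ≤ H * ‖x - y‖)
    (F : EuclideanSpace ℝ (Fin d) → ℝ)
    (hF : F = fun x => (n : ℝ)⁻¹ * ∑ i, f i x)
    (hsc : ∀ x y : EuclideanSpace ℝ (Fin d),
      F y + ⟪gradient F y, x - y⟫ + μ / 2 * ‖x - y‖ ^ 2 ≤ F x)
    (xstar : EuclideanSpace ℝ (Fin d)) (hmin : ∀ x, F xstar ≤ F x)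
    (w : Fin n → EuclideanSpace ℝ (Fin d))
    (φ : Fin n → EuclideanSpace ℝ (Fin d) → ℝ)
    (hφ : ∀ i x, φ i x = f i (w i) + ⟪gradient (f i) (w i), x - w i⟫
      + (1 / 2) * ⟪fderiv ℝ (gradient (f i)) (w i) (x - w i), x - w i⟫)
    (xplus : EuclideanSpace ℝ (Fin d))
    (hxplus : ∀ y : EuclideanSpace ℝ (Fin d),
      (n : ℝ)⁻¹ * ∑ i, (φ i xplus + M / 6 * ‖xplus - w i‖ ^ 3)
        ≤ (n : ℝ)⁻¹ * ∑ i, (φ i y + M / 6 * ‖y - w i‖ ^ 3))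
    (hinit : ∀ i, F (w i) - F xstar ≤ 2 * μ ^ 3 / (M + H) ^ 2) :
    F xplus - F xstar ≤ 2 * μ ^ 3 / (M + H) ^ 2 := by
  have hgrad : gradient F xstar = 0 := by
    rw [gradient, IsLocalMin.fderiv_eq_zero (Filter.Eventually.of_forall hmin), map_zero]
  have hclose (i : Fin n) : (M + H) / 6 * ‖xstar - w i‖ ^ 3 ≤ 2 * μ ^ 3 / (M + H) ^ 2 := by
    refine mul_cube_le_of_sq_le hμ (norm_nonneg _) ?_
    have hsc_i := hsc (w i) xstar
    rw [hgrad, inner_zero_left, norm_sub_rev] at hsc_i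
    linarith [hinit i]
  have htaylor (i : Fin n) (x : EuclideanSpace ℝ (Fin d)) :
      |f i x - φ i x| ≤ H / 6 * ‖x - w i‖ ^ 3 := by
    rw [hφ]
    exact abs_sub_taylor_two_le (hf i) (hLip i) (w i) x
  rw [sub_le_iff_le_add']
  calc F xplus ≤ (n : ℝ)⁻¹ * ∑ i, (φ i xplus + M / 6 * ‖xplus - w i‖ ^ 3) := by
        simp only [hF]
        refine mul_le_mul_of_nonneg_left (Finset.sum_le_sum fun i _ => ?_) (by positivity)
        have hHM : H / 6 * ‖xplus - w i‖ ^ 3 ≤ M / 6 * ‖xplus - w i‖ ^ 3 := by gcongr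
        linarith [(abs_le.1 (htaylor i xplus)).2]
    _ ≤ (n : ℝ)⁻¹ * ∑ i, (φ i xstar + M / 6 * ‖xstar - w i‖ ^ 3) := hxplus xstar
    _ ≤ (n : ℝ)⁻¹ * ∑ i, (f i xstar + (M + H) / 6 * ‖xstar - w i‖ ^ 3) := by
        refine mul_le_mul_of_nonneg_left (Finset.sum_le_sum fun i _ => ?_) (by positivity)
        linarith [(abs_le.1 (htaylor i xstar)).1]
    _ = F xstar + (n : ℝ)⁻¹ * ∑ i, (M + H) / 6 * ‖xstar - w i‖ ^ 3 := by
        rw [hF, Finset.sum_add_distrib, mul_add]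
    _ ≤ F xstar + 2 * μ ^ 3 / (M + H) ^ 2 := by
        gcongr
        exact inv_natCast_mul_sum_le (by positivity) hclose

theorem cubic_newton_sublevel_invariance
    (d n : ℕ) (hn : 0 < n)
    (f : Fin n → EuclideanSpace ℝ (Fin d) → ℝ)
    (μ H M : ℝ) (hμ : 0 < μ) (hH : 0 ≤ H) (hM : H ≤ M)
    (hf : ∀ i, ContDiff ℝ 2 (f i))
    (hLip : ∀ i, ∀ x y : EuclideanSpace ℝ (Fin d),
      ‖fderiv ℝ (gradient (f i)) x - fderiv ℝ (gradient (f i)) y‖ ≤ H * ‖x - y‖)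
    (F : EuclideanSpace ℝ (Fin d) → ℝ)
    (hF : F = fun x => (n : ℝ)⁻¹ * ∑ i, f i x)
    (hsc : ∀ x y : EuclideanSpace ℝ (Fin d),
      F y + ⟪gradient F y, x - y⟫ + μ / 2 * ‖x - y‖ ^ 2 ≤ F x)
    (xstar : EuclideanSpace ℝ (Fin d)) (hmin : ∀ x, F xstar ≤ F x)
    (w : Fin n → EuclideanSpace ℝ (Fin d))
    (φ : Fin n → EuclideanSpace ℝ (Fin d) → ℝ)
    (hφ : ∀ i x, φ i x = f i (w i) + ⟪gradient (f i) (w i), x - w i⟫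
      + (1 / 2) * ⟪fderiv ℝ (gradient (f i)) (w i) (x - w i), x - w i⟫)
    (xplus : EuclideanSpace ℝ (Fin d))
    (hxplus : ∀ y : EuclideanSpace ℝ (Fin d),
      (n : ℝ)⁻¹ * ∑ i, (φ i xplus + M / 6 * ‖xplus - w i‖ ^ 3)
        ≤ (n : ℝ)⁻¹ * ∑ i, (φ i y + M / 6 * ‖y - w i‖ ^ 3))
    (hinit : ∀ i, F (w i) - F xstar ≤ 2 * μ ^ 3 / (M + H) ^ 2) :
    F xplus - F xstar ≤ 2 * μ ^ 3 / (M + H) ^ 2 :=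
  cubic_newton_sublevel_invariance_general d n f μ H M hμ hM hf hLip F hF hsc xstar hmin w φ hφ
    xplus hxplus hinit
end
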